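/- Let F be a countable family of measurable maps f : S → S, let G = {A ∈ B : f⁻¹(A) = A for every f ∈ F} be the σ-field of F-invariant sets, and suppose ν is F-invariant, i.e. ν = ν ∘ f⁻¹ for every f ∈ F. Suppose X satisfies condition (1.1) with a kernel K that is an r.c.d. for ν given this G (so X ∈ L). Then P(μ ∈ I) = 1, where I = {λ ∈ P(S) : λ = λ ∘ f⁻¹ for every f ∈ F} is the set of F-invariant probability measures; equivalently, almost surely μ ∘ f⁻¹ = μ for every f ∈ F. -/

import Mathlib

/-!
Since `ν` is `f`-invariant and `K` is an r.c.d. given the `f`-invariant σ-field,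
`K x (f⁻¹ A) = K x A` for `ν`-a.e. `x`. Every `X n` has law `ν`, so the predictive
probabilities of `f⁻¹ A` and of `A` agree a.s., and `Y n = 1_{f⁻¹ A}(X n) - 1_A(X n)` has
vanishing conditional mean given `X 0, …, X (n-1)` for `n ≥ 1`. These bounded, pairwise
orthogonal variables satisfy `E[(Y 0 + ⋯ + Y (n-1))²] ≤ n`, so their averages tend to `0` in
`L²`; as they tend a.s. to `μ(f⁻¹ A) - μ(A)`, that limit vanishes a.s. A countable generating
π-system of the standard Borel space then gives `μ ∘ f⁻¹ = μ` a.s.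
-/

open MeasureTheory ProbabilityTheory Filter Set ENNReal NNReal

noncomputable section

variable {Ω S : Type*}

/-- `K` is a regular conditional distribution for `ν` given the sub-σ-field `G`. -/
def IsRCD [mS : MeasurableSpace S] (ν : Measure S) (K : S → Measure S)
    (G : MeasurableSpace S) : Prop :=
  G ≤ mS ∧ @Measurable S (@Measure S mS) mS inferInstance K ∧
    (∀ x, IsProbabilityMeasure (K x)) ∧
    (∀ A : Set S, MeasurableSet[mS] A → Measurable[G] fun x => K x A) ∧
    (∀ A : Set S, MeasurableSet[mS] A → ∀ g : Set S, MeasurableSet[G] g →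
      ν (A ∩ g) = ∫⁻ x in g, K x A ∂ν)

/-- `σ(X_0, …, X_{n-1})`, the σ-field generated by the first `n` variables. -/
def Filtr [mS : MeasurableSpace S] (X : ℕ → Ω → S) (n : ℕ) : MeasurableSpace Ω :=
  ⨆ i : Fin n, mS.comap (X i)

/-- The predictive probability `(θ ν(A) + ∑_{i<n} K(X_i)(A)) / (n + θ)`. -/
def predReal [MeasurableSpace S] (X : ℕ → Ω → S) (ν : Measure S) (θ : ℝ)
    (K : S → Measure S) (n : ℕ) (ω : Ω) (A : Set S) : ℝ :=
  (θ * (ν A).toReal + ∑ i ∈ Finset.range n, (K (X i ω) A).toReal) / (n + θ)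

/-- Condition (1.1): `X_1 ∼ ν` and the predictive distributions are
`(θ ν + ∑_{i≤n} K(X_i))/(n+θ)`. -/
def Cond11 [MeasurableSpace Ω] [MeasurableSpace S] (P : Measure Ω) (X : ℕ → Ω → S)
    (ν : Measure S) (θ : ℝ) (K : S → Measure S) : Prop :=
  (∀ n, Measurable (X n)) ∧ P.map (X 0) = ν ∧
    ∀ n : ℕ, 1 ≤ n → ∀ A : Set S, MeasurableSet A →
      P[((X n) ⁻¹' A).indicator (fun _ => (1 : ℝ)) | Filtr X n]
        =ᵐ[P] fun ω => predReal X ν θ K n ω A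

/-- `X ∈ L`: condition (1.1) holds and `K` is an r.c.d. for `ν` given some sub-σ-field. -/
def MemL [MeasurableSpace Ω] [mS : MeasurableSpace S] (P : Measure Ω) (X : ℕ → Ω → S)
    (ν : Measure S) (θ : ℝ) (K : S → Measure S) : Prop :=
  Cond11 P X ν θ K ∧ ∃ G : MeasurableSpace S, IsRCD (mS := mS) ν K G

/-- `μ` is a random probability measure directing `X`:
`μ(A) = lim_n (1/n) ∑_{i≤n} 1_A(X_i)` a.s. for every `A`. -/
def IsDirecting [MeasurableSpace Ω] [MeasurableSpace S] (P : Measure Ω) (X : ℕ → Ω → S)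
    (μ : Ω → Measure S) : Prop :=
  Measurable μ ∧ (∀ ω, IsProbabilityMeasure (μ ω)) ∧
    ∀ A : Set S, MeasurableSet A →
      ∀ᵐ ω ∂P, Tendsto
        (fun n : ℕ => (∑ i ∈ Finset.range n, A.indicator (fun _ => (1 : ℝ)) (X i ω)) / n)
        atTop (nhds ((μ ω A).toReal))

/-- Exchangeability of the sequence `X`. -/
def Exchangeable [MeasurableSpace Ω] [MeasurableSpace S] (P : Measure Ω)
    (X : ℕ → Ω → S) : Prop :=
  ∀ n : ℕ, ∀ τ : Equiv.Perm (Fin n),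
    P.map (fun ω (i : Fin n) => X (τ i) ω) = P.map (fun ω (i : Fin n) => X i ω)

/-- The Beta(1, θ) law on ℝ, with density `w ↦ θ (1-w)^(θ-1)` on `(0,1)`. -/
def betaOneMeasure (θ : ℝ) : Measure ℝ :=
  (volume : Measure ℝ).withDensity
    ((Set.Ioo (0 : ℝ) 1).indicator fun w => ENNReal.ofReal (θ * (1 - w) ^ (θ - 1)))

/-- `σ` is the stick-breaking law with parameter `θ` on sequences:
the law of `(T_n)` where `T_n = W_n ∏_{i<n} (1 - W_i)` and `(W_n)` is i.i.d. Beta(1, θ). -/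
def IsStickBreakingLaw (θ : ℝ) (σ : Measure (ℕ → ℝ)) : Prop :=
  ∃ (Ω' : Type) (_ : MeasurableSpace Ω') (Q : Measure Ω') (W : ℕ → Ω' → ℝ),
    IsProbabilityMeasure Q ∧ (∀ n, Measurable (W n)) ∧
    iIndepFun W Q ∧ (∀ n, Q.map (W n) = betaOneMeasure θ) ∧
    σ = Q.map fun ω' (j : ℕ) => W j ω' * ∏ i ∈ Finset.range j, (1 - W i ω')

/-- `(V_n)` has the stick-breaking distribution with parameter `θ`. -/
def IsStickBreaking [MeasurableSpace Ω] (P : Measure Ω) (θ : ℝ) (V : ℕ → Ω → ℝ) : Prop :=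
  ∃ σ : Measure (ℕ → ℝ), IsStickBreakingLaw θ σ ∧ P.map (fun ω (j : ℕ) => V j ω) = σ

/-- The random measure `∑_j V_j K(Z_j)`. -/
def mixSum [MeasurableSpace S] (K : S → Measure S) (V : ℕ → Ω → ℝ) (Z : ℕ → Ω → S)
    (ω : Ω) : Measure S :=
  Measure.sum fun j => ENNReal.ofReal (V j ω) • K (Z j ω)

/-- `σ(K)`: the sub-σ-field of `S` generated by the kernel `K`. -/
def sigmaK [mS : MeasurableSpace S] (K : S → Measure S) : MeasurableSpace S :=
  MeasurableSpace.comap K inferInstance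

/-- `γ` is the `p`-dimensional Gaussian law `N_p(0, M)`: every linear functional
`y ↦ ∑ i, b i * y i` has the one-dimensional Gaussian law with mean `0` and
variance `bᵀ M b`. -/
def IsGaussN {p : ℕ} (M : Matrix (Fin p) (Fin p) ℝ)
    (γ : Measure (EuclideanSpace ℝ (Fin p))) : Prop :=
  ∀ b : Fin p → ℝ,
    γ.map (fun y => ∑ i, b i * y i) =
      gaussianReal 0 (Real.toNNReal (∑ i, ∑ j, b i * M i j * b j))

/-- The matrix of second moments `(∫ y_i y_j dλ)_{i,j}` of a measure `λ` on `ℝ^p`. -/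
def covMatrix {p : ℕ} (lam : Measure (EuclideanSpace ℝ (Fin p))) :
    Matrix (Fin p) (Fin p) ℝ :=
  Matrix.of fun i j => ∫ y, y i * y j ∂lam

/-- The σ-field of measurable sets invariant under every `f i`. -/
def invariantSigma {ι : Type*} [mS : MeasurableSpace S] (f : ι → S → S) :
    MeasurableSpace S where
  MeasurableSet' A := MeasurableSet[mS] A ∧ ∀ i, f i ⁻¹' A = A
  measurableSet_empty := ⟨MeasurableSet.empty, fun _ => Set.preimage_empty⟩
  measurableSet_compl A hA := ⟨hA.1.compl, fun i => by rw [Set.preimage_compl, hA.2 i]⟩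
  measurableSet_iUnion g hg := ⟨MeasurableSet.iUnion fun k => (hg k).1,
    fun i => by rw [Set.preimage_iUnion]; exact Set.iUnion_congr fun k => (hg k).2 i⟩

theorem countable_generatePiSystem {α : Type*} {b : Set (Set α)} (hb : b.Countable) :
    (generatePiSystem b).Countable := by
  refine ((countable_ofPred_finite_subset hb).image sInter).mono fun s hs => ?_
  induction hs with
  | base hs => exact ⟨{_}, ⟨finite_singleton _, by simpa using hs⟩, sInter_singleton _⟩
  | inter _ _ _ ihs iht =>
    obtain ⟨ts, ⟨hts, htsb⟩, rfl⟩ := ihs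
    obtain ⟨tt, ⟨htt, httb⟩, rfl⟩ := iht
    exact ⟨ts ∪ tt, ⟨hts.union htt, union_subset htsb httb⟩, sInter_union ts tt⟩

theorem ae_eq_of_forall_ae_apply_eq [MeasurableSpace Ω] [MeasurableSpace S]
    [MeasurableSpace.CountablyGenerated S] {P : Measure Ω} {ρ₁ ρ₂ : Ω → Measure S}
    (hρ₁ : ∀ ω, IsFiniteMeasure (ρ₁ ω))
    (h : ∀ A, MeasurableSet A → ∀ᵐ ω ∂P, ρ₁ ω A = ρ₂ ω A) :
    ∀ᵐ ω ∂P, ρ₁ ω = ρ₂ ω := by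
  set C := generatePiSystem (MeasurableSpace.countableGeneratingSet S)
  have hgen : ‹MeasurableSpace S› = MeasurableSpace.generateFrom C := by
    rw [generateFrom_generatePiSystem_eq, MeasurableSpace.generateFrom_countableGeneratingSet]
  have hC : ∀ A ∈ C, MeasurableSet A := fun A hA =>
    hgen ▸ MeasurableSpace.measurableSet_generateFrom hA
  have hCae : ∀ᵐ ω ∂P, ∀ A ∈ C, ρ₁ ω A = ρ₂ ω A :=
    (ae_ball_iff (countable_generatePiSystem MeasurableSpace.countable_countableGeneratingSet)).2
      fun A hA => h A (hC A hA)
  filter_upwards [hCae, h univ MeasurableSet.univ] with ω hω huniv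
  exact ext_of_generate_finite C hgen (isPiSystem_generatePiSystem _) hω huniv

theorem ae_eq_zero_of_tendsto_of_lintegral_tendsto_zero [MeasurableSpace Ω] {P : Measure Ω}
    {F : ℕ → Ω → ℝ≥0∞} {G : Ω → ℝ≥0∞} (hF : ∀ n, AEMeasurable (F n) P)
    (hlim : ∀ᵐ ω ∂P, Tendsto (fun n => F n ω) atTop (nhds (G ω)))
    (hint : Tendsto (fun n => ∫⁻ ω, F n ω ∂P) atTop (nhds 0)) :
    G =ᵐ[P] 0 := by
  have hG : AEMeasurable G P := aemeasurable_of_tendsto_metrizable_ae' hF hlim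
  refine (lintegral_eq_zero_iff' hG).1 (nonpos_iff_eq_zero.1 ?_)
  calc ∫⁻ ω, G ω ∂P = ∫⁻ ω, liminf (fun n => F n ω) atTop ∂P :=
        lintegral_congr_ae (hlim.mono fun ω hω => hω.liminf_eq.symm)
    _ ≤ liminf (fun n => ∫⁻ ω, F n ω ∂P) atTop := lintegral_liminf_le' hF
    _ = 0 := hint.liminf_eq

section Orthogonal

variable [MeasurableSpace Ω] {P : Measure Ω} [IsProbabilityMeasure P] {Y : ℕ → Ω → ℝ}

theorem integral_sq_sum_le_of_orthogonal (hY : ∀ n, AEStronglyMeasurable (Y n) P)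
    (hbdd : ∀ n ω, |Y n ω| ≤ 1) (horth : ∀ i j, i < j → ∫ ω, Y i ω * Y j ω ∂P = 0) (n : ℕ) :
    ∫ ω, (∑ k ∈ Finset.range n, Y k ω) ^ 2 ∂P ≤ n := by
  have hint : ∀ i j, Integrable (fun ω => Y i ω * Y j ω) P := fun i j =>
    .of_bound ((hY i).mul (hY j)) 1 (ae_of_all _ fun ω => by
      rw [Real.norm_eq_abs, abs_mul]
      exact mul_le_one₀ (hbdd i ω) (abs_nonneg _) (hbdd j ω))
  have hdiag : ∀ i, ∫ ω, Y i ω * Y i ω ∂P ≤ 1 := fun i => by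
    refine (integral_mono (hint i i) (integrable_const 1) fun ω => ?_).trans_eq (by simp)
    rw [← abs_mul_abs_self]
    exact mul_le_one₀ (hbdd i ω) (abs_nonneg _) (hbdd i ω)
  have hoff : ∀ i j, i ≠ j → ∫ ω, Y i ω * Y j ω ∂P = 0 := fun i j hij => by
    rcases hij.lt_or_gt with h | h
    · exact horth i j h
    · simpa only [mul_comm] using horth j i h
  calc ∫ ω, (∑ k ∈ Finset.range n, Y k ω) ^ 2 ∂P
      = ∑ i ∈ Finset.range n, ∑ j ∈ Finset.range n, ∫ ω, Y i ω * Y j ω ∂P := by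
        simp_rw [sq, Finset.sum_mul_sum]
        rw [integral_finsetSum _ fun i _ => integrable_finsetSum _ fun j _ => hint i j]
        exact Finset.sum_congr rfl fun i _ => integral_finsetSum _ fun j _ => hint i j
    _ = ∑ i ∈ Finset.range n, ∫ ω, Y i ω * Y i ω ∂P :=
        Finset.sum_congr rfl fun i hi =>
          Finset.sum_eq_single_of_mem i hi fun j _ hji => hoff i j hji.symm
    _ ≤ ∑ _i ∈ Finset.range n, (1 : ℝ) := Finset.sum_le_sum fun i _ => hdiag i
    _ = n := by simp

theorem ae_eq_zero_of_tendsto_average_of_orthogonal {L : Ω → ℝ}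
    (hY : ∀ n, Measurable (Y n)) (hbdd : ∀ n ω, |Y n ω| ≤ 1)
    (horth : ∀ i j, i < j → ∫ ω, Y i ω * Y j ω ∂P = 0)
    (hlim : ∀ᵐ ω ∂P,
      Tendsto (fun n : ℕ => (∑ k ∈ Finset.range n, Y k ω) / n) atTop (nhds (L ω))) :
    L =ᵐ[P] 0 := by
  set Z : ℕ → Ω → ℝ := fun n ω => ((∑ k ∈ Finset.range n, Y k ω) / n) ^ 2
  have hZm : ∀ n, Measurable (Z n) := fun n =>
    ((Finset.measurable_fun_sum _ fun k _ => hY k).div_const _).pow_const 2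
  have hZ_le : ∀ n ω, Z n ω ≤ 1 := fun n ω => by
    rcases n.eq_zero_or_pos with rfl | hn
    · simp [Z]
    have hsum : |∑ k ∈ Finset.range n, Y k ω| ≤ n := (Finset.abs_sum_le_sum_abs _ _).trans <| by
      simpa using Finset.sum_le_sum fun k (_ : k ∈ Finset.range n) => hbdd k ω
    simp only [Z]
    rw [div_pow, div_le_one (by positivity), ← sq_abs]
    exact pow_le_pow_left₀ (abs_nonneg _) hsum 2
  have hZ_int : ∀ n, 1 ≤ n → ∫⁻ ω, ENNReal.ofReal (Z n ω) ∂P ≤ ENNReal.ofReal (n : ℝ)⁻¹ := by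
    intro n hn
    have hZi : Integrable (Z n) P := .of_bound (hZm n).aestronglyMeasurable 1 <|
      ae_of_all _ fun ω => by rw [Real.norm_eq_abs, abs_of_nonneg (by positivity)]; exact hZ_le n ω
    rw [← ofReal_integral_eq_lintegral_ofReal hZi (ae_of_all _ fun ω => by positivity)]
    refine ENNReal.ofReal_le_ofReal ?_
    have hn' : (0 : ℝ) < n := by exact_mod_cast hn
    calc ∫ ω, Z n ω ∂P = (∫ ω, (∑ k ∈ Finset.range n, Y k ω) ^ 2 ∂P) / n ^ 2 := by
          simp_rw [Z, div_pow]; exact integral_div _ _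
      _ ≤ n / n ^ 2 := by
          gcongr
          exact integral_sq_sum_le_of_orthogonal (fun k => (hY k).aestronglyMeasurable) hbdd horth n
      _ = (n : ℝ)⁻¹ := by field_simp
  have hL : (fun ω => ENNReal.ofReal (L ω ^ 2)) =ᵐ[P] 0 := by
    refine ae_eq_zero_of_tendsto_of_lintegral_tendsto_zero
      (fun n => (hZm n).ennreal_ofReal.aemeasurable)
      (hlim.mono fun ω hω => ENNReal.tendsto_ofReal (hω.pow 2)) ?_
    refine tendsto_of_tendsto_of_tendsto_of_le_of_le' tendsto_const_nhds
      (by simpa using ENNReal.tendsto_ofReal tendsto_inv_atTop_nhds_zero_nat)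
      (Eventually.of_forall fun n => zero_le) ?_
    filter_upwards [eventually_ge_atTop 1] with n hn
    exact hZ_int n hn
  filter_upwards [hL] with ω hω
  simpa [sq_nonneg] using hω

end Orthogonal

theorem integral_mul_eq_zero_of_condExp_eq_zero {m m₀ : MeasurableSpace Ω}
    {P : Measure Ω} [IsFiniteMeasure P] (hm : m ≤ m₀) {Y Z : Ω → ℝ}
    (hY : StronglyMeasurable[m] Y) (hYZ : Integrable (Y * Z) P) (hZ : Integrable Z P)
    (hZ0 : P[Z | m] =ᵐ[P] 0) :
    ∫ ω, (Y * Z) ω ∂P = 0 := by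
  have hYZ0 : P[Y * Z | m] =ᵐ[P] 0 := by
    filter_upwards [condExp_mul_of_stronglyMeasurable_left hY hYZ hZ, hZ0] with ω h h0
    rw [h, Pi.mul_apply, h0, Pi.zero_apply, mul_zero]
  rw [← integral_condExp hm, integral_congr_ae hYZ0, integral_zero']

section Filtration

variable [MeasurableSpace S] {X : ℕ → Ω → S}

theorem filtr_le [MeasurableSpace Ω] (hX : ∀ n, Measurable (X n)) (n : ℕ) :
    Filtr X n ≤ ‹MeasurableSpace Ω› :=
  iSup_le fun i => (hX i).comap_le

theorem measurable_filtr {i n : ℕ} (hi : i < n) : Measurable[Filtr X n] (X i) :=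
  Measurable.of_comap_le (le_iSup (fun j : Fin n => MeasurableSpace.comap (X j) _) ⟨i, hi⟩)

end Filtration

section RCD

variable {G : MeasurableSpace S} [mS : MeasurableSpace S] {ν : Measure S} {K : S → Measure S}

theorem IsRCD.measurable_apply (hK : IsRCD (mS := mS) ν K G) {A : Set S} (hA : MeasurableSet A) :
    Measurable fun x => K x A :=
  (Measure.measurable_coe hA).comp hK.2.1

theorem IsRCD.apply_le_one (hK : IsRCD (mS := mS) ν K G) (x : S) (A : Set S) : K x A ≤ 1 :=
  have := hK.2.2.1 x
  prob_le_one

theorem IsRCD.lintegral_eq (hK : IsRCD (mS := mS) ν K G) {A : Set S} (hA : MeasurableSet A) :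
    ∫⁻ x, K x A ∂ν = ν A := by
  simpa using (hK.2.2.2.2 A hA univ MeasurableSet.univ).symm

theorem IsRCD.ae_eq_of_forall_inter_eq [IsFiniteMeasure ν] (hK : IsRCD (mS := mS) ν K G)
    {A B : Set S} (hA : MeasurableSet A) (hB : MeasurableSet B)
    (h : ∀ g, MeasurableSet[G] g → ν (A ∩ g) = ν (B ∩ g)) :
    ∀ᵐ x ∂ν, K x A = K x B := by
  obtain ⟨hG, -, -, hKG, hKν⟩ := hK
  refine ae_eq_of_ae_eq_trim (hm := hG) <|
    ae_eq_of_forall_setLIntegral_eq_of_sigmaFinite (hKG A hA) (hKG B hB) fun g hg _ => ?_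
  rw [setLIntegral_trim hG (hKG A hA) hg, setLIntegral_trim hG (hKG B hB) hg,
    ← hKν A hA g hg, ← hKν B hB g hg, h g hg]

end RCD

theorem measure_preimage_inter_of_invariantSigma {ι : Type*} [MeasurableSpace S] {ν : Measure S}
    {f : ι → S → S} {i : ι} (hf : Measurable (f i)) (hinv : ν.map (f i) = ν) {A g : Set S}
    (hA : MeasurableSet A) (hg : MeasurableSet[invariantSigma f] g) :
    ν (f i ⁻¹' A ∩ g) = ν (A ∩ g) := by
  rw [← hg.2 i, ← preimage_inter, hg.2 i, ← Measure.map_apply hf (hA.inter hg.1), hinv]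

section MemL

variable [MeasurableSpace Ω] [MeasurableSpace S] {P : Measure Ω} {X : ℕ → Ω → S} {ν : Measure S}
  {θ : ℝ} {K : S → Measure S}

theorem MemL.integral_kernel_apply (hX : MemL P X ν θ K) {i : ℕ} (hlaw : P.map (X i) = ν)
    {A : Set S} (hA : MeasurableSet A) :
    ∫ ω, (K (X i ω) A).toReal ∂P = (ν A).toReal := by
  have hK := hX.2.choose_spec
  have hKA := hK.measurable_apply hA
  rw [← integral_map (f := fun x => (K x A).toReal) (hX.1.1 i).aemeasurable
      hKA.ennreal_toReal.aestronglyMeasurable, hlaw, integral_toReal hKA.aemeasurable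
      (ae_of_all _ fun x => (hK.apply_le_one x A).trans_lt one_lt_top),
    hK.lintegral_eq hA]

variable [IsProbabilityMeasure P]

theorem MemL.integral_predReal (hX : MemL P X ν θ K) (hθ : 0 < θ) {n : ℕ}
    (hlaw : ∀ i < n, P.map (X i) = ν) {A : Set S} (hA : MeasurableSet A) :
    ∫ ω, predReal X ν θ K n ω A ∂P = (ν A).toReal := by
  have hK := hX.2.choose_spec
  have hint : ∀ i, Integrable (fun ω => (K (X i ω) A).toReal) P := fun i =>
    .of_bound ((hK.measurable_apply hA).comp (hX.1.1 i)).ennreal_toReal.aestronglyMeasurable 1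
      (ae_of_all _ fun ω => by
        rw [Real.norm_eq_abs, abs_of_nonneg ENNReal.toReal_nonneg]
        exact ENNReal.toReal_le_of_le_ofReal zero_le_one (by simpa using hK.apply_le_one _ A))
  simp only [predReal]
  rw [integral_div, integral_add (integrable_const _) (integrable_finsetSum _ fun i _ => hint i),
    integral_finsetSum _ fun i _ => hint i,
    Finset.sum_congr rfl fun i hi => hX.integral_kernel_apply (hlaw i (Finset.mem_range.1 hi)) hA]
  simp only [integral_const, probReal_univ, one_smul, Finset.sum_const, Finset.card_range,
    nsmul_eq_mul]
  field_simp
  ring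

variable [IsFiniteMeasure ν]

theorem MemL.map_eq (hX : MemL P X ν θ K) (hθ : 0 < θ) (n : ℕ) : P.map (X n) = ν := by
  induction n using Nat.strong_induction_on with
  | _ n ih =>
  obtain ⟨hXm, hX0, hpred⟩ := hX.1
  rcases n.eq_zero_or_pos with rfl | hn
  · exact hX0
  refine Measure.ext fun A hA => ?_
  rw [Measure.map_apply (hXm n) hA, ← ENNReal.toReal_eq_toReal_iff' (measure_ne_top _ _)
    (measure_ne_top _ _), ← hX.integral_predReal hθ ih hA, ← integral_congr_ae (hpred n hn A hA),
    integral_condExp (filtr_le hXm n), integral_indicator_const _ ((hXm n) hA)]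
  simp [Measure.real]

variable {A B : Set S}

theorem MemL.ae_forall_kernel_eq (hX : MemL P X ν θ K) (hθ : 0 < θ)
    (hKAB : ∀ᵐ x ∂ν, K x A = K x B) :
    ∀ᵐ ω ∂P, ∀ j, K (X j ω) A = K (X j ω) B := by
  refine ae_all_iff.2 fun j =>
    ae_of_ae_map (p := fun x => K x A = K x B) (hX.1.1 j).aemeasurable ?_
  rw [hX.map_eq hθ j]
  exact hKAB

theorem MemL.condExp_indicator_sub_eq_zero (hX : MemL P X ν θ K) (hθ : 0 < θ)
    (hA : MeasurableSet A) (hB : MeasurableSet B) (hKAB : ∀ᵐ x ∂ν, K x A = K x B) {n : ℕ}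
    (hn : 1 ≤ n) :
    P[(X n ⁻¹' A).indicator (fun _ => (1 : ℝ)) - (X n ⁻¹' B).indicator (fun _ => 1) | Filtr X n]
      =ᵐ[P] 0 := by
  have hK := hX.2.choose_spec
  have hνAB : ν A = ν B := by
    rw [← hK.lintegral_eq hA, ← hK.lintegral_eq hB, lintegral_congr_ae hKAB]
  have hpred : ∀ᵐ ω ∂P, predReal X ν θ K n ω A = predReal X ν θ K n ω B := by
    filter_upwards [hX.ae_forall_kernel_eq hθ hKAB] with ω hω
    simp only [predReal, hνAB, hω]
  filter_upwards [condExp_sub ((integrable_const (1 : ℝ)).indicator ((hX.1.1 n) hA))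
    ((integrable_const (1 : ℝ)).indicator ((hX.1.1 n) hB)) (Filtr X n), hX.1.2.2 n hn A hA,
    hX.1.2.2 n hn B hB, hpred] with ω h hAω hBω hω
  rw [h, Pi.sub_apply, hAω, hBω, hω, sub_self, Pi.zero_apply]

theorem MemL.ae_eq_of_ae_kernel_eq (hX : MemL P X ν θ K) (hθ : 0 < θ) {μ : Ω → Measure S}
    (hμ : IsDirecting P X μ) (hA : MeasurableSet A) (hB : MeasurableSet B)
    (hKAB : ∀ᵐ x ∂ν, K x A = K x B) :
    ∀ᵐ ω ∂P, μ ω A = μ ω B := by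
  set Y : ℕ → Ω → ℝ := fun n =>
    (X n ⁻¹' A).indicator (fun _ => 1) - (X n ⁻¹' B).indicator (fun _ => 1)
  have hYm : ∀ {m : MeasurableSpace Ω} n, Measurable[m] (X n) → Measurable[m] (Y n) :=
    fun n hXn => (measurable_const.indicator (hXn hA)).sub (measurable_const.indicator (hXn hB))
  have hbdd : ∀ n ω, |Y n ω| ≤ 1 := fun n ω => by
    by_cases h₁ : X n ω ∈ A <;> by_cases h₂ : X n ω ∈ B <;> simp [Y, h₁, h₂]
  have hint : ∀ n, Integrable (Y n) P := fun n =>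
    .of_bound (hYm n (hX.1.1 n)).aestronglyMeasurable 1 (ae_of_all _ (hbdd n))
  have horth : ∀ i j, i < j → ∫ ω, Y i ω * Y j ω ∂P = 0 := fun i j hij =>
    integral_mul_eq_zero_of_condExp_eq_zero (filtr_le hX.1.1 j)
      (hYm i (measurable_filtr hij)).stronglyMeasurable
      (.of_bound ((hint i).1.mul (hint j).1) 1 (ae_of_all _ fun ω => by
        rw [Pi.mul_apply, Real.norm_eq_abs, abs_mul]
        exact mul_le_one₀ (hbdd i ω) (abs_nonneg _) (hbdd j ω)))
      (hint j) (hX.condExp_indicator_sub_eq_zero hθ hA hB hKAB (by omega))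
  have hlim : ∀ᵐ ω ∂P, Tendsto (fun n : ℕ => (∑ k ∈ Finset.range n, Y k ω) / n) atTop
      (nhds ((μ ω A).toReal - (μ ω B).toReal)) := by
    filter_upwards [hμ.2.2 A hA, hμ.2.2 B hB] with ω hAω hBω
    have hY : ∀ k, Y k ω = A.indicator (fun _ => 1) (X k ω) - B.indicator (fun _ => 1) (X k ω) :=
      fun k => rfl
    simpa only [hY, Finset.sum_sub_distrib, _root_.sub_div] using hAω.sub hBω
  filter_upwards [ae_eq_zero_of_tendsto_average_of_orthogonal (fun n => hYm n (hX.1.1 n)) hbdd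
    horth hlim] with ω hω
  have := hμ.2.1 ω
  exact (ENNReal.toReal_eq_toReal_iff' (measure_ne_top _ _) (measure_ne_top _ _)).1
    (sub_eq_zero.1 hω)

end MemL

theorem stmt_19 {Ω S ι : Type*} [MeasurableSpace Ω] [mS : MeasurableSpace S]
    [StandardBorelSpace S] [Countable ι]
    (f : ι → S → S) (hf : ∀ i, Measurable (f i))
    (P : Measure Ω) [IsProbabilityMeasure P] (X : ℕ → Ω → S) (ν : Measure S)
    [IsProbabilityMeasure ν] (θ : ℝ) (hθ : 0 < θ) (K : S → Measure S)
    (hinv : ∀ i, ν.map (f i) = ν)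
    (h11 : Cond11 P X ν θ K) (hK : IsRCD (mS := mS) ν K (invariantSigma f))
    (μ : Ω → Measure S) (hμ : IsDirecting P X μ) :
    P {ω | ∀ i, (μ ω).map (f i) = μ ω} = 1 := by
  have hX : MemL P X ν θ K := ⟨h11, _, hK⟩
  have hpreimage : ∀ i A, MeasurableSet A → ∀ᵐ ω ∂P, (μ ω).map (f i) A = μ ω A :=
    fun i A hA => by
    have hKA : ∀ᵐ x ∂ν, K x (f i ⁻¹' A) = K x A := hK.ae_eq_of_forall_inter_eq (hf i hA) hA
      fun g hg => measure_preimage_inter_of_invariantSigma (hf i) (hinv i) hA hg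
    simpa only [Measure.map_apply (hf i) hA] using
      hX.ae_eq_of_ae_kernel_eq hθ hμ (hf i hA) hA hKA
  have hae : ∀ᵐ ω ∂P, ∀ i, (μ ω).map (f i) = μ ω := ae_all_iff.2 fun i =>
    ae_eq_of_forall_ae_apply_eq (fun ω => have := hμ.2.1 ω; inferInstance) (hpreimage i)
  rw [measure_congr (ae_eq_univ.2 hae), measure_univ]

end
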